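/- arXiv:2111.07509 — 4 statements merged into one kernel-verified Lean document; each statement's English description precedes it below -/
import Mathlib

section
/- If ψ is three times differentiable with ψ' > 0 on an open interval and satisfies Kummer's equation q − (ψ')^2 + (3/4)(ψ''/ψ')^2 − (1/2)(ψ'''/ψ') = 0, then the modulus function m(x) = 1/ψ'(x) satisfies Appell's equation m'''(x) + 4 q(x) m'(x) + 2 q'(x) m(x) = 0. -/
/-- If `ψ` is three times differentiable with `ψ' > 0` on an open interval and
satisfies Kummer's equation, then the modulus function `m = 1/ψ'` satisfies
Appell's equation `m''' + 4 q m' + 2 q' m = 0`. -/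
theorem appell_of_kummer (a b : ℝ) (q ψ : ℝ → ℝ)
    (hq : ∀ x ∈ Set.Ioo a b, DifferentiableAt ℝ q x)
    (hψ : ∀ x ∈ Set.Ioo a b, DifferentiableAt ℝ ψ x)
    (hψ' : ∀ x ∈ Set.Ioo a b, DifferentiableAt ℝ (deriv ψ) x)
    (hψ'' : ∀ x ∈ Set.Ioo a b, DifferentiableAt ℝ (deriv (deriv ψ)) x)
    (hpos : ∀ x ∈ Set.Ioo a b, 0 < deriv ψ x)
    (hkummer : ∀ x ∈ Set.Ioo a b,
      q x - (deriv ψ x) ^ 2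
        + (3 / 4) * (deriv (deriv ψ) x / deriv ψ x) ^ 2
        - (1 / 2) * (deriv (deriv (deriv ψ)) x / deriv ψ x) = 0) :
    ∀ x ∈ Set.Ioo a b,
      deriv (deriv (deriv (fun t => 1 / deriv ψ t))) x
        + 4 * q x * deriv (fun t => 1 / deriv ψ t) x
        + 2 * deriv q x * (1 / deriv ψ x) = 0 := by
  intro x hx
  have hs : IsOpen (Set.Ioo a b) := isOpen_Ioo
  have hne : ∀ y ∈ Set.Ioo a b, deriv ψ y ≠ 0 := fun y hy => (hpos y hy).ne'
  have ht : ∀ y ∈ Set.Ioo a b, deriv (deriv (deriv ψ)) y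
      = 2 * deriv ψ y * q y - 2 * (deriv ψ y)^3
        + (3/2) * (deriv (deriv ψ) y)^2 / deriv ψ y := by
    intro y hy
    have h := hkummer y hy
    have hp := hne y hy
    have key : 2*(deriv ψ y)^2 * deriv (deriv (deriv ψ)) y
        = 4*(deriv ψ y)^3*q y - 4*(deriv ψ y)^5 + 3*(deriv ψ y)*(deriv (deriv ψ) y)^2 := by
      field_simp at h
      linear_combination -(deriv ψ y) * h/2
    have e1 : deriv (deriv (deriv ψ)) y
        = (2*(deriv ψ y)^2 * deriv (deriv (deriv ψ)) y) / (2*(deriv ψ y)^2) := by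
      field_simp
    rw [e1, key]
    field_simp
    ring
  have hm' : ∀ y ∈ Set.Ioo a b, deriv (fun t => 1 / deriv ψ t) y
      = -(deriv (deriv ψ) y) / (deriv ψ y)^2 := by
    intro y hy
    have h1 : HasDerivAt (deriv ψ) (deriv (deriv ψ) y) y := (hψ' y hy).hasDerivAt
    have h2 : HasDerivAt (fun t => 1 / deriv ψ t)
        ((0 * deriv ψ y - 1 * deriv (deriv ψ) y) / (deriv ψ y)^2) y :=
      (hasDerivAt_const y 1).div h1 (hne y hy)
    rw [h2.deriv]; ring
  have hm'' : ∀ y ∈ Set.Ioo a b, deriv (deriv (fun t => 1 / deriv ψ t)) y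
      = -2 * q y / deriv ψ y + 2 * deriv ψ y
        + (1/2) * (deriv (deriv ψ) y)^2 / (deriv ψ y)^3 := by
    intro y hy
    have hev : deriv (fun t => 1 / deriv ψ t) =ᶠ[nhds y]
        (fun t => -(deriv (deriv ψ) t) / (deriv ψ t)^2) :=
      Filter.eventually_of_mem (hs.mem_nhds hy) hm'
    rw [hev.deriv_eq]
    have h1 : HasDerivAt (deriv ψ) (deriv (deriv ψ) y) y := (hψ' y hy).hasDerivAt
    have h2 : HasDerivAt (deriv (deriv ψ)) (deriv (deriv (deriv ψ)) y) y := (hψ'' y hy).hasDerivAt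
    have h3 : HasDerivAt (fun t => (deriv ψ t)^2) ((2 : ℕ) * deriv ψ y ^ 1 * deriv (deriv ψ) y) y :=
      h1.pow 2
    have h5 : HasDerivAt (fun t => -(deriv (deriv ψ) t) / (deriv ψ t)^2) _ y :=
      h2.neg.div h3 (pow_ne_zero 2 (hne y hy))
    rw [h5.deriv, ht y hy, Pi.neg_apply]
    have hp := hne y hy
    field_simp
    ring
  have hev2 : deriv (deriv (fun t => 1 / deriv ψ t)) =ᶠ[nhds x]
      (fun t => -2 * q t / deriv ψ t + 2 * deriv ψ t
        + (1/2) * (deriv (deriv ψ) t)^2 / (deriv ψ t)^3) :=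
    Filter.eventually_of_mem (hs.mem_nhds hx) hm''
  rw [hev2.deriv_eq]
  have hp := hne x hx
  have h1 : HasDerivAt (deriv ψ) (deriv (deriv ψ) x) x := (hψ' x hx).hasDerivAt
  have h2 : HasDerivAt (deriv (deriv ψ)) (deriv (deriv (deriv ψ)) x) x := (hψ'' x hx).hasDerivAt
  have hq1 : HasDerivAt q (deriv q x) x := (hq x hx).hasDerivAt
  have hA : HasDerivAt (fun t => -2 * q t / deriv ψ t)
      ((-2 * deriv q x * deriv ψ x - -2 * q x * deriv (deriv ψ) x) / (deriv ψ x)^2) x :=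
    (hq1.const_mul (-2)).div h1 hp
  have hB : HasDerivAt (fun t => 2 * deriv ψ t) (2 * deriv (deriv ψ) x) x := h1.const_mul 2
  have hCnum : HasDerivAt (fun t => (1/2) * (deriv (deriv ψ) t)^2)
      ((1/2) * ((2:ℕ) * deriv (deriv ψ) x ^ 1 * deriv (deriv (deriv ψ)) x)) x :=
    (h2.pow 2).const_mul (1/2)
  have hCden : HasDerivAt (fun t => (deriv ψ t)^3) ((3:ℕ) * deriv ψ x ^ 2 * deriv (deriv ψ) x) x :=
    h1.pow 3
  have hC := hCnum.div hCden (pow_ne_zero 3 hp)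
  have hbig : HasDerivAt (fun t => -2 * q t / deriv ψ t + 2 * deriv ψ t
      + (1/2) * (deriv (deriv ψ) t)^2 / (deriv ψ t)^3) _ x :=
    (hA.add hB).add hC
  rw [hbig.deriv, hm' x hx, ht x hx]
  field_simp
  ring
end

section
/- Let u and v be real solutions of y'' + q y = 0 on an open interval I with constant Wronskian w = u v' − u' v ≠ 0, and suppose u(x)^2 + v(x)^2 > 0 on I. Then the function ψ'(x) = w/(u(x)^2 + v(x)^2) satisfies Kummer's equation q − (ψ')^2 + (3/4)(ψ''/ψ')^2 − (1/2)(ψ'''/ψ') = 0 on I. -/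
/-- If `u, v` solve `y'' + q y = 0` on an open interval with constant nonzero
Wronskian `w` and `u² + v² > 0`, then `φ = w/(u² + v²)` (playing the role of
`ψ'`) satisfies Kummer's equation there. -/
theorem kummer_of_solutions (a b : ℝ) (q u v : ℝ → ℝ) (w : ℝ)
    (hu : ∀ x ∈ Set.Ioo a b, DifferentiableAt ℝ u x)
    (hu' : ∀ x ∈ Set.Ioo a b, DifferentiableAt ℝ (deriv u) x)
    (hv : ∀ x ∈ Set.Ioo a b, DifferentiableAt ℝ v x)
    (hv' : ∀ x ∈ Set.Ioo a b, DifferentiableAt ℝ (deriv v) x)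
    (hueq : ∀ x ∈ Set.Ioo a b, deriv (deriv u) x + q x * u x = 0)
    (hveq : ∀ x ∈ Set.Ioo a b, deriv (deriv v) x + q x * v x = 0)
    (hw : ∀ x ∈ Set.Ioo a b, u x * deriv v x - deriv u x * v x = w)
    (hw0 : w ≠ 0)
    (hm : ∀ x ∈ Set.Ioo a b, 0 < u x ^ 2 + v x ^ 2) :
    ∀ x ∈ Set.Ioo a b,
      q x - (w / (u x ^ 2 + v x ^ 2)) ^ 2
        + (3 / 4) * (deriv (fun t => w / (u t ^ 2 + v t ^ 2)) x
            / (w / (u x ^ 2 + v x ^ 2))) ^ 2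
        - (1 / 2) * (deriv (deriv (fun t => w / (u t ^ 2 + v t ^ 2))) x
            / (w / (u x ^ 2 + v x ^ 2))) = 0 := by
  have hsopen : IsOpen (Set.Ioo a b) := isOpen_Ioo
  -- derivative of m = u² + v²
  have hmder : ∀ y ∈ Set.Ioo a b, HasDerivAt (fun t => u t ^ 2 + v t ^ 2)
      (2 * (u y * deriv u y + v y * deriv v y)) y := by
    intro y hy
    have h := (((hu y hy).hasDerivAt.pow 2).add ((hv y hy).hasDerivAt.pow 2))
    refine h.congr_deriv ?_
    push_cast
    ring
  -- first derivative of φ = w / m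
  have hφder : ∀ y ∈ Set.Ioo a b, HasDerivAt (fun t => w / (u t ^ 2 + v t ^ 2))
      (-(w * (2 * (u y * deriv u y + v y * deriv v y))) / (u y ^ 2 + v y ^ 2) ^ 2) y := by
    intro y hy
    have h := (hasDerivAt_const y w).div (hmder y hy) (hm y hy).ne'
    refine h.congr_deriv ?_
    ring
  have hφ' : ∀ y ∈ Set.Ioo a b, deriv (fun t => w / (u t ^ 2 + v t ^ 2)) y =
      -(w * (2 * (u y * deriv u y + v y * deriv v y))) / (u y ^ 2 + v y ^ 2) ^ 2 :=
    fun y hy => (hφder y hy).deriv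
  intro x hx
  have hmx := hm x hx
  have hmne : u x ^ 2 + v x ^ 2 ≠ 0 := hmx.ne'
  -- second derivative
  have heq : deriv (fun t => w / (u t ^ 2 + v t ^ 2)) =ᶠ[nhds x]
      (fun y => -(w * (2 * (u y * deriv u y + v y * deriv v y))) / (u y ^ 2 + v y ^ 2) ^ 2) := by
    filter_upwards [hsopen.mem_nhds hx] with y hy using hφ' y hy
  have hNder : HasDerivAt (fun y => -(w * (2 * (u y * deriv u y + v y * deriv v y))))
      (-(w * (2 * (deriv u x * deriv u x + u x * deriv (deriv u) x
        + (deriv v x * deriv v x + v x * deriv (deriv v) x))))) x := by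
    have h := (((hu x hx).hasDerivAt.mul (hu' x hx).hasDerivAt).add
      ((hv x hx).hasDerivAt.mul (hv' x hx).hasDerivAt)).const_mul (-(2 * w))
    have hfun : (fun y => -(w * (2 * (u y * deriv u y + v y * deriv v y))))
        = fun y => -(2 * w) * (u y * deriv u y + v y * deriv v y) := by
      funext y; ring
    rw [hfun]
    refine h.congr_deriv ?_
    ring
  have hDder : HasDerivAt (fun y => (u y ^ 2 + v y ^ 2) ^ 2)
      (2 * (u x ^ 2 + v x ^ 2) * (2 * (u x * deriv u x + v x * deriv v x))) x := by
    have h := (hmder x hx).pow 2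
    refine h.congr_deriv ?_
    push_cast
    ring
  have hDne : (u x ^ 2 + v x ^ 2) ^ 2 ≠ 0 := pow_ne_zero _ hmne
  have hFder := hNder.div hDder hDne
  have hφ'' : deriv (deriv (fun t => w / (u t ^ 2 + v t ^ 2))) x =
      ((-(w * (2 * (deriv u x * deriv u x + u x * deriv (deriv u) x
        + (deriv v x * deriv v x + v x * deriv (deriv v) x)))))
        * (u x ^ 2 + v x ^ 2) ^ 2
       - (-(w * (2 * (u x * deriv u x + v x * deriv v x))))
        * (2 * (u x ^ 2 + v x ^ 2) * (2 * (u x * deriv u x + v x * deriv v x))))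
      / ((u x ^ 2 + v x ^ 2) ^ 2) ^ 2 := by
    rw [heq.deriv_eq]
    exact hFder.deriv
  rw [hφ' x hx, hφ'']
  have huu : deriv (deriv u) x = -(q x * u x) := by linarith [hueq x hx]
  have hvv : deriv (deriv v) x = -(q x * v x) := by linarith [hveq x hx]
  have hwx := hw x hx
  rw [huu, hvv, ← hwx]
  have hφne : u x * deriv v x - deriv u x * v x ≠ 0 := hwx ▸ hw0
  field_simp
  ring
end

section
/- For ν ≥ 0, the Legendre function of the second kind Q_ν(x) is completely monotone on (1,∞): (−1)^k Q_ν^{(k)}(x) ≥ 0 for all integers k ≥ 0 and all x > 1. -/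
open MeasureTheory Set Real

/-- For `ν ≥ 0`, the Legendre function of the second kind `Q_ν`, represented on
`(1,∞)` as the Laplace transform of the (nonnegative) modified spherical Bessel
function `i_ν`, is completely monotone on `(1,∞)`:
`(−1)^k Q_ν^{(k)}(x) ≥ 0` for all `k ≥ 0` and `x > 1`. -/
theorem legendreQ_completely_monotone (ν : ℝ) (hν : 0 ≤ ν)
    (iν Qν : ℝ → ℝ)
    (hiν_nonneg : ∀ t ∈ Set.Ioi (0 : ℝ), 0 ≤ iν t)
    (hint : ∀ x ∈ Set.Ioi (1 : ℝ),
      MeasureTheory.IntegrableOn (fun t => Real.exp (-x * t) * iν t) (Set.Ioi 0))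
    (hQ : ∀ x ∈ Set.Ioi (1 : ℝ),
      Qν x = ∫ t in Set.Ioi (0 : ℝ), Real.exp (-x * t) * iν t) :
    ∀ k : ℕ, ∀ x ∈ Set.Ioi (1 : ℝ), 0 ≤ (-1 : ℝ) ^ k * iteratedDeriv k Qν x := by
  -- iν is a.e. strongly measurable on (0, ∞)
  have hmeas : AEStronglyMeasurable iν (volume.restrict (Set.Ioi 0)) := by
    have h2 := (hint 2 (by norm_num)).aestronglyMeasurable
    have hEq : iν = fun t => Real.exp (2 * t) * (Real.exp (-2 * t) * iν t) := by
      funext t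
      rw [← mul_assoc, ← Real.exp_add]
      norm_num
    rw [hEq]
    exact ((Real.continuous_exp.comp (continuous_const.mul continuous_id)).aestronglyMeasurable).mul h2
  set F : ℕ → ℝ → ℝ → ℝ := fun k x t => Real.exp (-x * t) * (t ^ k * iν t) with hF
  have hFmeas : ∀ k (x : ℝ), AEStronglyMeasurable (F k x) (volume.restrict (Set.Ioi 0)) := by
    intro k x
    exact ((Real.continuous_exp.comp (continuous_const.mul continuous_id)).aestronglyMeasurable).mul
      ((continuous_pow k).aestronglyMeasurable.mul hmeas)
  -- key pointwise bound: for y < x, t > 0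
  have hbound : ∀ (k : ℕ) {y x t : ℝ}, y < x → 0 < t →
      t ^ k * Real.exp (-x * t) ≤ (k.factorial / (x - y) ^ k) * Real.exp (-y * t) := by
    intro k y x t hyx ht
    set δ := x - y with hδ
    have hδ0 : 0 < δ := by simp [hδ]; linarith
    have h1 : (δ * t) ^ k / k.factorial ≤ Real.exp (δ * t) :=
      Real.pow_div_factorial_le_exp _ (by positivity) k
    have h2 : Real.exp (-x * t) = Real.exp (-y * t) / Real.exp (δ * t) := by
      rw [← Real.exp_sub, hδ]; ring_nf
    have hk : (0:ℝ) < k.factorial := by positivity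
    have hδk : (0:ℝ) < δ ^ k := by positivity
    have h3 : (δ * t) ^ k ≤ (k.factorial : ℝ) * Real.exp (δ * t) := by
      rw [div_le_iff₀ hk] at h1
      linarith [h1]
    rw [h2, mul_div_assoc', div_le_iff₀ (Real.exp_pos _), div_mul_eq_mul_div,
      div_mul_eq_mul_div, le_div_iff₀ hδk]
    have h4 : (δ * t) ^ k = δ ^ k * t ^ k := mul_pow δ t k
    nlinarith [Real.exp_pos (-y * t), Real.exp_pos (δ * t), h3]
  -- integrability of F k x for x > 1
  have hFint : ∀ (k : ℕ), ∀ x ∈ Set.Ioi (1 : ℝ), IntegrableOn (F k x) (Set.Ioi 0) := by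
    intro k x hx
    simp only [Set.mem_Ioi] at hx
    set y := (1 + x) / 2 with hy
    have hy1 : 1 < y := by simp [hy]; linarith
    have hyx : y < x := by simp [hy]; linarith
    set c := (k.factorial : ℝ) / (x - y) ^ k with hc
    have hc0 : 0 ≤ c := by
      have : (0:ℝ) < x - y := by linarith
      positivity
    refine Integrable.mono ((hint y hy1).const_mul c) (hFmeas k x) ?_
    rw [ae_restrict_iff' measurableSet_Ioi]
    filter_upwards with t ht
    have ht0 : 0 < t := ht
    have hiν := hiν_nonneg t ht
    have h1 : ‖F k x t‖ = t ^ k * Real.exp (-x * t) * iν t := by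
      rw [Real.norm_eq_abs, abs_of_nonneg (by positivity)]
      simp [hF]; ring
    have h2 : ‖c * (Real.exp (-y * t) * iν t)‖ = c * Real.exp (-y * t) * iν t := by
      rw [Real.norm_eq_abs, abs_of_nonneg (by positivity)]
      ring
    rw [h1, h2]
    exact mul_le_mul_of_nonneg_right (hbound k hyx ht0) hiν
  -- derivative under the integral
  have hderiv : ∀ (k : ℕ), ∀ x ∈ Set.Ioi (1 : ℝ),
      HasDerivAt (fun z => ∫ t in Set.Ioi (0 : ℝ), F k z t)
        (∫ t in Set.Ioi (0 : ℝ), -(F (k + 1) x t)) x := by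
    intro k x hx
    simp only [Set.mem_Ioi] at hx
    set ε := (x - 1) / 2 with hε
    have hε0 : 0 < ε := by simp [hε]; linarith
    set y := (1 + x) / 2 with hy
    have hy1 : 1 < y := by simp [hy]; linarith
    have hball : ∀ z ∈ Metric.ball x ε, y < z := by
      intro z hz
      rw [Metric.mem_ball, Real.dist_eq, abs_lt] at hz
      simp [hy]; linarith [hz.1]
    have key := hasDerivAt_integral_of_dominated_loc_of_deriv_le (F := fun z t => F k z t)
      (F' := fun z t => -(F (k + 1) z t)) (bound := F (k + 1) y)
      (μ := volume.restrict (Set.Ioi 0)) (x₀ := x) (Metric.ball_mem_nhds x hε0)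
      (Filter.Eventually.of_forall fun z => hFmeas k z)
      (hFint k x hx)
      ((hFmeas (k + 1) x).neg)
      ?_ (hFint (k + 1) y hy1) ?_
    · exact key.2
    · rw [ae_restrict_iff' measurableSet_Ioi]
      filter_upwards with t ht
      intro z hz
      have ht0 : 0 < t := ht
      have hiν := hiν_nonneg t ht
      have hyz := hball z hz
      have h1 : ‖-(F (k + 1) z t)‖ = t ^ (k + 1) * Real.exp (-z * t) * iν t := by
        rw [norm_neg, Real.norm_eq_abs, abs_of_nonneg (by positivity)]
        simp [hF]; ring
      rw [h1]
      have hexp : Real.exp (-z * t) ≤ Real.exp (-y * t) := by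
        apply Real.exp_le_exp.2
        nlinarith
      have : t ^ (k + 1) * Real.exp (-z * t) * iν t ≤ t ^ (k + 1) * Real.exp (-y * t) * iν t := by
        have h2 : t ^ (k+1) * Real.exp (-z*t) ≤ t ^ (k+1) * Real.exp (-y*t) :=
          mul_le_mul_of_nonneg_left hexp (by positivity)
        exact mul_le_mul_of_nonneg_right h2 hiν
      refine this.trans ?_
      simp [hF]; ring_nf; simp [le_refl]
    · rw [ae_restrict_iff' measurableSet_Ioi]
      filter_upwards with t ht
      intro z hz
      have : HasDerivAt (fun z => Real.exp (-z * t)) (-t * Real.exp (-z * t)) z := by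
        have h0 : HasDerivAt (fun z : ℝ => -z * t) (-t) z := by
          simpa using ((hasDerivAt_id z).neg.mul_const t)
        simpa [mul_comm] using h0.exp
      have h3 := this.mul_const (t ^ k * iν t)
      exact h3.congr_deriv (by simp [hF]; ring)
  -- identify iterated derivatives
  have hiter : ∀ (k : ℕ), ∀ x ∈ Set.Ioi (1 : ℝ),
      iteratedDeriv k Qν x = (-1 : ℝ) ^ k * ∫ t in Set.Ioi (0 : ℝ), F k x t := by
    intro k
    induction k with
    | zero =>
      intro x hx
      simp only [iteratedDeriv_zero, pow_zero, one_mul, hQ x hx]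
      congr 1
      funext t
      simp [hF]
    | succ k ih =>
      intro x hx
      rw [iteratedDeriv_succ]
      have hev : iteratedDeriv k Qν =ᶠ[nhds x]
          fun z => (-1 : ℝ) ^ k * ∫ t in Set.Ioi (0 : ℝ), F k z t := by
        filter_upwards [isOpen_Ioi.mem_nhds hx] with z hz using ih z hz
      rw [hev.deriv_eq]
      have hd := ((hderiv k x hx).const_mul ((-1 : ℝ) ^ k)).deriv
      rw [hd, integral_neg]
      ring
  intro k x hx
  rw [hiter k x hx, ← mul_assoc, ← pow_add]
  have : ((-1 : ℝ)) ^ (k + k) = 1 := by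
    rw [← two_mul, pow_mul]; norm_num
  rw [this, one_mul]
  apply setIntegral_nonneg measurableSet_Ioi
  intro t ht
  have := hiν_nonneg t ht
  have ht0 : (0:ℝ) < t := ht
  simp only [hF]
  positivity
end

section
/- For ν ≥ 0, given Durand's formula |Q_ν(x)|² = ∫₁^∞ Q_ν(x² + (1−x²)t) dt/√(t²−1) for x ∈ (−1,1), and the complete monotonicity of Q_ν on (1,∞), the function |Q_ν(x)|² is absolutely monotone on (0,1): all its derivatives are nonnegative there. -/
open Set MeasureTheory Filter Metric Topology

namespace DurandAux

/-! ### An inductive class of absolutely monotone functions built from a derivative chain -/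

/-- Functions built from `x ↦ g m (x^2)` by multiplication by `x`, nonnegative scalars and
addition. -/
inductive AM (g : ℕ → ℝ → ℝ) : (ℝ → ℝ) → Prop
  | comp (m : ℕ) : AM g (fun x => g m (x ^ 2))
  | mul_id (f : ℝ → ℝ) : AM g f → AM g (fun x => x * f x)
  | smul (c : ℝ) (f : ℝ → ℝ) : 0 ≤ c → AM g f → AM g (fun x => c * f x)
  | add (f₁ f₂ : ℝ → ℝ) : AM g f₁ → AM g f₂ → AM g (fun x => f₁ x + f₂ x)

lemma sq_mem_Ioo {x : ℝ} (hx : x ∈ Ioo (0 : ℝ) 1) : x ^ 2 ∈ Ioo (0 : ℝ) 1 := by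
  obtain ⟨h0, h1⟩ := hx
  constructor
  · positivity
  · nlinarith

lemma AM.nonneg {g : ℕ → ℝ → ℝ} (hpos : ∀ m, ∀ y ∈ Ioo (0 : ℝ) 1, 0 ≤ g m y)
    {f : ℝ → ℝ} (hf : AM g f) : ∀ x ∈ Ioo (0 : ℝ) 1, 0 ≤ f x := by
  induction hf with
  | comp m => exact fun x hx => hpos m _ (sq_mem_Ioo hx)
  | mul_id f hf ih => exact fun x hx => mul_nonneg hx.1.le (ih x hx)
  | smul c f hc hf ih => exact fun x hx => mul_nonneg hc (ih x hx)
  | add f₁ f₂ h1 h2 ih1 ih2 => exact fun x hx => add_nonneg (ih1 x hx) (ih2 x hx)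

lemma AM.hasDeriv {g : ℕ → ℝ → ℝ}
    (hg : ∀ m, ∀ y ∈ Ioo (0 : ℝ) 1, HasDerivAt (g m) (g (m + 1) y) y)
    {f : ℝ → ℝ} (hf : AM g f) :
    ∃ f' : ℝ → ℝ, AM g f' ∧ ∀ x ∈ Ioo (0 : ℝ) 1, HasDerivAt f (f' x) x := by
  induction hf with
  | comp m =>
    refine ⟨fun x => x * (2 * g (m + 1) (x ^ 2)),
      .mul_id _ (.smul 2 _ (by norm_num) (.comp (m + 1))), fun x hx => ?_⟩
    have hsq : HasDerivAt (fun x : ℝ => x ^ 2) (2 * x) x := by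
      simpa using hasDerivAt_pow 2 x
    have h2 := HasDerivAt.comp (h := fun y : ℝ => y ^ 2) x (hg m _ (sq_mem_Ioo hx)) hsq
    have h3 : x * (2 * g (m + 1) (x ^ 2)) = g (m + 1) (x ^ 2) * (2 * x) := by ring
    show HasDerivAt (fun x => g m (x ^ 2)) (x * (2 * g (m + 1) (x ^ 2))) x
    rw [h3]; exact h2
  | mul_id f hf ih =>
    obtain ⟨f', hAM, hd⟩ := ih
    refine ⟨fun x => f x + x * f' x, .add _ _ hf (.mul_id _ hAM), fun x hx => ?_⟩
    have h := (hasDerivAt_id x).mul (hd x hx)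
    have h' : HasDerivAt (id * f) (f x + x * f' x) x := by simpa using h
    exact h'
  | smul c f hc hf ih =>
    obtain ⟨f', hAM, hd⟩ := ih
    exact ⟨fun x => c * f' x, .smul c _ hc hAM, fun x hx => (hd x hx).const_mul c⟩
  | add f₁ f₂ h1 h2 ih1 ih2 =>
    obtain ⟨f₁', hAM1, hd1⟩ := ih1
    obtain ⟨f₂', hAM2, hd2⟩ := ih2
    exact ⟨fun x => f₁' x + f₂' x, .add _ _ hAM1 hAM2, fun x hx => (hd1 x hx).add (hd2 x hx)⟩

lemma AM.iteratedDeriv_nonneg {g : ℕ → ℝ → ℝ}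
    (hpos : ∀ m, ∀ y ∈ Ioo (0 : ℝ) 1, 0 ≤ g m y)
    (hg : ∀ m, ∀ y ∈ Ioo (0 : ℝ) 1, HasDerivAt (g m) (g (m + 1) y) y) :
    ∀ (k : ℕ) (f : ℝ → ℝ), AM g f → ∀ x ∈ Ioo (0 : ℝ) 1, 0 ≤ iteratedDeriv k f x := by
  intro k
  induction k with
  | zero =>
    intro f hf x hx
    simpa [iteratedDeriv_zero] using hf.nonneg hpos x hx
  | succ k ih =>
    intro f hf x hx
    obtain ⟨f', hAM', hd⟩ := hf.hasDeriv hg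
    have heq : Set.EqOn (deriv f) f' (Ioo (0 : ℝ) 1) := fun y hy => (hd y hy).deriv
    rw [iteratedDeriv_succ', heq.iteratedDeriv_of_isOpen isOpen_Ioo k hx]
    exact ih f' hAM' x hx

/-! ### Consequences of smoothness and complete monotonicity of `Qν` -/

variable {Qν : ℝ → ℝ}

lemma smooth_iter (hQ : ContDiffOn ℝ (⊤ : ℕ∞) Qν (Set.Ioi 1)) (k : ℕ) :
    ContDiffOn ℝ (⊤ : ℕ∞) (iteratedDeriv k Qν) (Set.Ioi 1) := by
  induction k with
  | zero => simpa [iteratedDeriv_zero] using hQ.of_le (mod_cast le_top)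
  | succ k ih =>
    rw [iteratedDeriv_succ]
    exact ((contDiffOn_infty_iff_deriv_of_isOpen isOpen_Ioi).mp ih).2

lemma diffAt_iter (hQ : ContDiffOn ℝ (⊤ : ℕ∞) Qν (Set.Ioi 1)) (k : ℕ) {x : ℝ} (hx : 1 < x) :
    DifferentiableAt ℝ (iteratedDeriv k Qν) x := by
  have h := ((contDiffOn_infty_iff_deriv_of_isOpen isOpen_Ioi).mp (smooth_iter hQ k)).1
  exact h.differentiableAt (isOpen_Ioi.mem_nhds hx)

lemma hasDerivAt_iter (hQ : ContDiffOn ℝ (⊤ : ℕ∞) Qν (Set.Ioi 1)) (k : ℕ) {x : ℝ} (hx : 1 < x) :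
    HasDerivAt (iteratedDeriv k Qν) (iteratedDeriv (k + 1) Qν x) x := by
  rw [iteratedDeriv_succ]
  exact (diffAt_iter hQ k hx).hasDerivAt

lemma anti (hQ : ContDiffOn ℝ (⊤ : ℕ∞) Qν (Set.Ioi 1))
    (hcm : ∀ k : ℕ, ∀ x ∈ Set.Ioi (1 : ℝ), 0 ≤ (-1 : ℝ) ^ k * iteratedDeriv k Qν x) (k : ℕ) :
    AntitoneOn (fun x => (-1 : ℝ) ^ k * iteratedDeriv k Qν x) (Set.Ioi 1) := by
  apply antitoneOn_of_deriv_nonpos (convex_Ioi 1)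
  · exact continuousOn_const.mul (smooth_iter hQ k).continuousOn
  · intro x hx
    rw [interior_Ioi] at hx
    exact ((differentiableAt_const _).mul (diffAt_iter hQ k hx)).differentiableWithinAt
  · intro x hx
    rw [interior_Ioi] at hx
    have hder : deriv (fun x => (-1 : ℝ) ^ k * iteratedDeriv k Qν x) x
        = (-1 : ℝ) ^ k * iteratedDeriv (k + 1) Qν x := by
      rw [iteratedDeriv_succ]
      exact deriv_const_mul _ (diffAt_iter hQ k hx)
    rw [hder]
    have h := hcm (k + 1) x hx
    rw [pow_succ] at h
    nlinarith [h]

lemma cm_chain (hQ : ContDiffOn ℝ (⊤ : ℕ∞) Qν (Set.Ioi 1))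
    (hcm : ∀ k : ℕ, ∀ x ∈ Set.Ioi (1 : ℝ), 0 ≤ (-1 : ℝ) ^ k * iteratedDeriv k Qν x) :
    ∀ (k : ℕ) (a b : ℝ), 1 < a → a < b →
      (-1 : ℝ) ^ k * iteratedDeriv k Qν b ≤ 2 ^ (k * (k + 1) / 2) * Qν a / (b - a) ^ k := by
  intro k
  induction k with
  | zero =>
    intro a b ha hab
    have h := anti hQ hcm 0 (mem_Ioi.2 ha) (mem_Ioi.2 (ha.trans hab)) hab.le
    simpa using h
  | succ k ih =>
    intro a b ha hab
    set c := (a + b) / 2 with hc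
    have hac : a < c := by rw [hc]; linarith
    have hcb : c < b := by rw [hc]; linarith
    have hc1 : 1 < c := ha.trans hac
    have hb1 : 1 < b := ha.trans hab
    set g : ℝ → ℝ := fun x => (-1 : ℝ) ^ k * iteratedDeriv k Qν x with hgdef
    have hsub : Icc c b ⊆ Ioi 1 := fun x hx => lt_of_lt_of_le hc1 hx.1
    have hgc : ContinuousOn g (Icc c b) :=
      (continuousOn_const.mul (smooth_iter hQ k).continuousOn).mono hsub
    have hgd : DifferentiableOn ℝ g (Ioo c b) := fun x hx =>
      ((differentiableAt_const _).mul
        (diffAt_iter hQ k (hc1.trans hx.1))).differentiableWithinAt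
    obtain ⟨ξ, hξ, hslope⟩ := exists_deriv_eq_slope g hcb hgc hgd
    have hξ1 : 1 < ξ := hc1.trans hξ.1
    have hderiv : deriv g ξ = (-1 : ℝ) ^ k * iteratedDeriv (k + 1) Qν ξ := by
      rw [hgdef, iteratedDeriv_succ]
      exact deriv_const_mul _ (diffAt_iter hQ k hξ1)
    have hmono := anti hQ hcm (k + 1) (mem_Ioi.2 hξ1) (mem_Ioi.2 hb1) hξ.2.le
    have hgb : 0 ≤ g b := hcm k b (mem_Ioi.2 hb1)
    have hihc : g c ≤ 2 ^ (k * (k + 1) / 2) * Qν a / (c - a) ^ k := ih a c ha hac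
    have hQa : 0 ≤ Qν a := by simpa using hcm 0 a (mem_Ioi.2 ha)
    have hbc : (0 : ℝ) < b - c := by linarith
    have hba : (0 : ℝ) < b - a := by linarith
    have h1 : (g b - g c) / (b - c) = (-1 : ℝ) ^ k * iteratedDeriv (k + 1) Qν ξ := by
      rw [← hderiv, hslope]
    have key : (-1 : ℝ) ^ (k + 1) * iteratedDeriv (k + 1) Qν b ≤ g c / (b - c) := by
      have h2 : (-1 : ℝ) ^ (k + 1) * iteratedDeriv (k + 1) Qν ξ
          = -((g b - g c) / (b - c)) := by
        rw [h1, pow_succ]; ring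
      have h3 : (-1 : ℝ) ^ (k + 1) * iteratedDeriv (k + 1) Qν b
          ≤ (-1 : ℝ) ^ (k + 1) * iteratedDeriv (k + 1) Qν ξ := hmono
      have h4 : -((g b - g c) / (b - c)) = (g c - g b) / (b - c) := by ring
      have h5 : (g c - g b) / (b - c) ≤ g c / (b - c) :=
        (div_le_div_iff_of_pos_right hbc).2 (by linarith)
      calc (-1 : ℝ) ^ (k + 1) * iteratedDeriv (k + 1) Qν b
          ≤ (-1 : ℝ) ^ (k + 1) * iteratedDeriv (k + 1) Qν ξ := h3
        _ = -((g b - g c) / (b - c)) := h2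
        _ = (g c - g b) / (b - c) := h4
        _ ≤ g c / (b - c) := h5
    have h6 : g c / (b - c) ≤ (2 ^ (k * (k + 1) / 2) * Qν a / (c - a) ^ k) / (b - c) :=
      (div_le_div_iff_of_pos_right hbc).2 hihc
    have hca : c - a = (b - a) / 2 := by rw [hc]; ring
    have hbc' : b - c = (b - a) / 2 := by rw [hc]; ring
    have hexp : (k + 1) * (k + 1 + 1) / 2 = k * (k + 1) / 2 + (k + 1) := by
      have hp : (k + 1) * (k + 1 + 1) = k * (k + 1) + 2 * (k + 1) := by ring
      omega
    have h7 : (2 ^ (k * (k + 1) / 2) * Qν a / (c - a) ^ k) / (b - c)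
        = 2 ^ ((k + 1) * (k + 1 + 1) / 2) * Qν a / (b - a) ^ (k + 1) := by
      rw [hca, hbc', hexp, pow_add, div_pow]
      have h8 : (b - a) ≠ 0 := hba.ne'
      field_simp
      ring
    calc (-1 : ℝ) ^ (k + 1) * iteratedDeriv (k + 1) Qν b
        ≤ g c / (b - c) := key
      _ ≤ (2 ^ (k * (k + 1) / 2) * Qν a / (c - a) ^ k) / (b - c) := h6
      _ = 2 ^ ((k + 1) * (k + 1 + 1) / 2) * Qν a / (b - a) ^ (k + 1) := h7

/-! ### The family of integrands and integrals -/

variable (Qν) in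
/-- The `k`-th `y`-derivative of the integrand of Durand's formula, where `y = x²`. -/
noncomputable def D (k : ℕ) (y t : ℝ) : ℝ :=
  (1 - t) ^ k * iteratedDeriv k Qν (y + (1 - y) * t) / Real.sqrt (t ^ 2 - 1)

variable (Qν) in
/-- The `k`-th derivative of Durand's integral, as a function of `y = x²`. -/
noncomputable def Nk (k : ℕ) (y : ℝ) : ℝ := ∫ t in Set.Ioi (1 : ℝ), D Qν k y t

lemma arg_mem {y t : ℝ} (hy : y < 1) (ht : 1 < t) : 1 < y + (1 - y) * t := by nlinarith

lemma D_nonneg (hcm : ∀ k : ℕ, ∀ x ∈ Set.Ioi (1 : ℝ), 0 ≤ (-1 : ℝ) ^ k * iteratedDeriv k Qν x)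
    (k : ℕ) {y t : ℝ} (hy : y < 1) (ht : 1 < t) : 0 ≤ D Qν k y t := by
  have hb := arg_mem hy ht
  have h := hcm k _ (mem_Ioi.2 hb)
  rw [D]
  apply div_nonneg _ (Real.sqrt_nonneg _)
  have h2 : (1 - t) ^ k * iteratedDeriv k Qν (y + (1 - y) * t)
      = (t - 1) ^ k * ((-1 : ℝ) ^ k * iteratedDeriv k Qν (y + (1 - y) * t)) := by
    rw [← neg_sub t 1, neg_pow]; ring
  rw [h2]
  exact mul_nonneg (pow_nonneg (by linarith) k) h

lemma D_contOn (hQ : ContDiffOn ℝ (⊤ : ℕ∞) Qν (Set.Ioi 1)) (k : ℕ) {y : ℝ} (hy : y < 1) :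
    ContinuousOn (D Qν k y) (Set.Ioi 1) := by
  have hmap : MapsTo (fun t : ℝ => y + (1 - y) * t) (Set.Ioi 1) (Set.Ioi 1) :=
    fun t ht => mem_Ioi.2 (arg_mem hy (mem_Ioi.1 ht))
  have hnum : ContinuousOn (fun t : ℝ => (1 - t) ^ k * iteratedDeriv k Qν (y + (1 - y) * t))
      (Set.Ioi 1) := by
    apply ContinuousOn.mul
    · exact ((continuous_const.sub continuous_id).pow k).continuousOn
    · exact (smooth_iter hQ k).continuousOn.comp
        ((continuous_const.add (continuous_const.mul continuous_id)).continuousOn) hmap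
  have hden : ContinuousOn (fun t : ℝ => Real.sqrt (t ^ 2 - 1)) (Set.Ioi 1) :=
    (Real.continuous_sqrt.comp ((continuous_pow 2).sub continuous_const)).continuousOn
  have hne : ∀ t ∈ Set.Ioi (1 : ℝ), Real.sqrt (t ^ 2 - 1) ≠ 0 := by
    intro t ht
    have : (0 : ℝ) < t ^ 2 - 1 := by
      have := mem_Ioi.1 ht; nlinarith
    exact (Real.sqrt_pos.2 this).ne'
  exact hnum.div hden hne

lemma D_asm (hQ : ContDiffOn ℝ (⊤ : ℕ∞) Qν (Set.Ioi 1)) (k : ℕ) {y : ℝ} (hy : y < 1) :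
    AEStronglyMeasurable (D Qν k y) (volume.restrict (Set.Ioi 1)) :=
  (D_contOn hQ k hy).aestronglyMeasurable measurableSet_Ioi

lemma D_bound (hQ : ContDiffOn ℝ (⊤ : ℕ∞) Qν (Set.Ioi 1))
    (hcm : ∀ k : ℕ, ∀ x ∈ Set.Ioi (1 : ℝ), 0 ≤ (-1 : ℝ) ^ k * iteratedDeriv k Qν x)
    (k : ℕ) {y u v t : ℝ} (hyu : y ≤ u) (huv : u < v) (hv : v < 1) (ht : 1 < t) :
    D Qν k y t ≤ (2 ^ (k * (k + 1) / 2) / (v - u) ^ k) * D Qν 0 v t := by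
  have ht1 : (0 : ℝ) < t - 1 := by linarith
  have hy1 : y < 1 := by linarith
  have hu1 : u < 1 := by linarith
  have hby : 1 < y + (1 - y) * t := arg_mem hy1 ht
  have hbu : 1 < u + (1 - u) * t := arg_mem hu1 ht
  have hbv : 1 < v + (1 - v) * t := arg_mem hv ht
  have horder1 : u + (1 - u) * t ≤ y + (1 - y) * t := by nlinarith
  have horder2 : v + (1 - v) * t < u + (1 - u) * t := by nlinarith
  have h1 := anti hQ hcm k (mem_Ioi.2 hbu) (mem_Ioi.2 hby) horder1
  have h2 := cm_chain hQ hcm k _ _ hbv horder2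
  have h3 : (u + (1 - u) * t) - (v + (1 - v) * t) = (v - u) * (t - 1) := by ring
  rw [h3] at h2
  have hvu : (0 : ℝ) < v - u := by linarith
  have hsq : (0 : ℝ) < Real.sqrt (t ^ 2 - 1) := Real.sqrt_pos.2 (by nlinarith)
  have hnum : (-1 : ℝ) ^ k * iteratedDeriv k Qν (y + (1 - y) * t)
      ≤ 2 ^ (k * (k + 1) / 2) * Qν (v + (1 - v) * t) / ((v - u) * (t - 1)) ^ k :=
    le_trans h1 h2
  have hmul := mul_le_mul_of_nonneg_right hnum (le_of_lt (pow_pos ht1 k))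
  have hQv : 0 ≤ Qν (v + (1 - v) * t) := by simpa using hcm 0 _ (mem_Ioi.2 hbv)
  have hrhs : 2 ^ (k * (k + 1) / 2) * Qν (v + (1 - v) * t) / ((v - u) * (t - 1)) ^ k
      * (t - 1) ^ k = 2 ^ (k * (k + 1) / 2) * Qν (v + (1 - v) * t) / (v - u) ^ k := by
    rw [mul_pow]
    have h4 : ((v - u) ^ k : ℝ) ≠ 0 := (pow_pos hvu k).ne'
    have h5 : ((t - 1) ^ k : ℝ) ≠ 0 := (pow_pos ht1 k).ne'
    field_simp
  rw [hrhs] at hmul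
  -- now divide by sqrt
  have hlhs : D Qν k y t
      = ((-1 : ℝ) ^ k * iteratedDeriv k Qν (y + (1 - y) * t) * (t - 1) ^ k)
        / Real.sqrt (t ^ 2 - 1) := by
    rw [D, ← neg_sub t 1, neg_pow]; ring
  have hrhs2 : (2 ^ (k * (k + 1) / 2) / (v - u) ^ k) * D Qν 0 v t
      = (2 ^ (k * (k + 1) / 2) * Qν (v + (1 - v) * t) / (v - u) ^ k)
        / Real.sqrt (t ^ 2 - 1) := by
    rw [D]
    simp only [pow_zero, one_mul, iteratedDeriv_zero]
    ring
  rw [hlhs, hrhs2]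
  exact div_le_div_of_nonneg_right hmul hsq.le |>.trans_eq rfl

lemma base_int
    (hint : ∀ x ∈ Set.Ioo (-1 : ℝ) 1,
      MeasureTheory.IntegrableOn
        (fun t => Qν (x ^ 2 + (1 - x ^ 2) * t) / Real.sqrt (t ^ 2 - 1))
        (Set.Ioi 1))
    {v : ℝ} (h0 : 0 ≤ v) (h1 : v < 1) : IntegrableOn (D Qν 0 v) (Set.Ioi 1) := by
  have hs : Real.sqrt v ∈ Ioo (-1 : ℝ) 1 := by
    constructor
    · exact lt_of_lt_of_le (by norm_num) (Real.sqrt_nonneg v)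
    · calc Real.sqrt v < Real.sqrt 1 := Real.sqrt_lt_sqrt h0 h1
        _ = 1 := Real.sqrt_one
  have h2 := hint _ hs
  rw [Real.sq_sqrt h0] at h2
  have h3 : D Qν 0 v = fun t => Qν (v + (1 - v) * t) / Real.sqrt (t ^ 2 - 1) := by
    funext t
    simp [D, iteratedDeriv_zero]
  rw [h3]
  exact h2

lemma D_int (hQ : ContDiffOn ℝ (⊤ : ℕ∞) Qν (Set.Ioi 1))
    (hcm : ∀ k : ℕ, ∀ x ∈ Set.Ioi (1 : ℝ), 0 ≤ (-1 : ℝ) ^ k * iteratedDeriv k Qν x)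
    (hint : ∀ x ∈ Set.Ioo (-1 : ℝ) 1,
      MeasureTheory.IntegrableOn
        (fun t => Qν (x ^ 2 + (1 - x ^ 2) * t) / Real.sqrt (t ^ 2 - 1))
        (Set.Ioi 1))
    (k : ℕ) {y : ℝ} (hy : y < 1) : IntegrableOn (D Qν k y) (Set.Ioi 1) := by
  set u := max y 0 with hu
  have hu1 : u < 1 := max_lt hy zero_lt_one
  set v := (u + 1) / 2 with hv
  have huv : u < v := by rw [hv]; linarith
  have hv1 : v < 1 := by rw [hv]; linarith
  have hu0 : 0 ≤ u := le_max_right y 0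
  have hv0 : 0 ≤ v := by rw [hv]; linarith
  have hyu : y ≤ u := le_max_left y 0
  have hbase := (base_int hint hv0 hv1).const_mul (2 ^ (k * (k + 1) / 2) / (v - u) ^ k)
  refine hbase.mono (D_asm hQ k hy) ?_
  rw [ae_restrict_iff' measurableSet_Ioi]
  refine ae_of_all _ fun t ht => ?_
  have ht1 := mem_Ioi.1 ht
  have h1 := D_bound hQ hcm k hyu huv hv1 ht1
  have h2 := D_nonneg hcm k hy ht1
  have h3 := D_nonneg hcm 0 hv1 ht1
  have hvu : (0 : ℝ) < v - u := by linarith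
  have h4 : (0 : ℝ) ≤ 2 ^ (k * (k + 1) / 2) / (v - u) ^ k * D Qν 0 v t := by positivity
  rw [Real.norm_eq_abs, Real.norm_eq_abs, abs_of_nonneg h2, abs_of_nonneg h4]
  exact h1

lemma Nk_nonneg (hcm : ∀ k : ℕ, ∀ x ∈ Set.Ioi (1 : ℝ), 0 ≤ (-1 : ℝ) ^ k * iteratedDeriv k Qν x)
    (k : ℕ) {y : ℝ} (hy : y < 1) : 0 ≤ Nk Qν k y :=
  setIntegral_nonneg measurableSet_Ioi fun t ht => D_nonneg hcm k hy (mem_Ioi.1 ht)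

lemma Nk_hasDeriv (hQ : ContDiffOn ℝ (⊤ : ℕ∞) Qν (Set.Ioi 1))
    (hcm : ∀ k : ℕ, ∀ x ∈ Set.Ioi (1 : ℝ), 0 ≤ (-1 : ℝ) ^ k * iteratedDeriv k Qν x)
    (hint : ∀ x ∈ Set.Ioo (-1 : ℝ) 1,
      MeasureTheory.IntegrableOn
        (fun t => Qν (x ^ 2 + (1 - x ^ 2) * t) / Real.sqrt (t ^ 2 - 1))
        (Set.Ioi 1))
    (k : ℕ) {y₀ : ℝ} (h0 : 0 < y₀) (h1 : y₀ < 1) :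
    HasDerivAt (Nk Qν k) (Nk Qν (k + 1) y₀) y₀ := by
  have hε : (0 : ℝ) < (1 - y₀) / 4 := by linarith
  set ε := (1 - y₀) / 4 with hεdef
  set u := y₀ + ε with hudef
  set v := (u + 1) / 2 with hvdef
  have hu1 : u < 1 := by rw [hudef, hεdef]; linarith
  have huv : u < v := by rw [hvdef]; linarith
  have hv1 : v < 1 := by rw [hvdef]; linarith
  have hv0 : 0 ≤ v := by
    have : 0 ≤ u := by rw [hudef]; linarith
    rw [hvdef]; linarith
  have hmeas : ∀ᶠ y in 𝓝 y₀, AEStronglyMeasurable (D Qν k y) (volume.restrict (Set.Ioi 1)) := by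
    filter_upwards [Iio_mem_nhds h1] with y hy
    exact D_asm hQ k hy
  have hint0 : Integrable (D Qν k y₀) (volume.restrict (Set.Ioi 1)) := D_int hQ hcm hint k h1
  have hmeas' : AEStronglyMeasurable (D Qν (k + 1) y₀) (volume.restrict (Set.Ioi 1)) :=
    D_asm hQ (k + 1) h1
  have hbound : ∀ᵐ t ∂(volume.restrict (Set.Ioi (1 : ℝ))), ∀ y ∈ ball y₀ ε,
      ‖D Qν (k + 1) y t‖
        ≤ (2 ^ ((k + 1) * (k + 1 + 1) / 2) / (v - u) ^ (k + 1)) * D Qν 0 v t := by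
    rw [ae_restrict_iff' measurableSet_Ioi]
    refine ae_of_all _ fun t ht y hy => ?_
    have ht1 := mem_Ioi.1 ht
    rw [mem_ball, Real.dist_eq] at hy
    have hy' := abs_lt.1 hy
    have hyu : y ≤ u := by rw [hudef]; linarith [hy'.2]
    have hy1 : y < 1 := by linarith
    rw [Real.norm_eq_abs, abs_of_nonneg (D_nonneg hcm (k + 1) hy1 ht1)]
    exact D_bound hQ hcm (k + 1) hyu huv hv1 ht1
  have hbint : Integrable
      (fun t => (2 ^ ((k + 1) * (k + 1 + 1) / 2) / (v - u) ^ (k + 1)) * D Qν 0 v t)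
      (volume.restrict (Set.Ioi 1)) :=
    (base_int hint hv0 hv1).const_mul _
  have hdiff : ∀ᵐ t ∂(volume.restrict (Set.Ioi (1 : ℝ))), ∀ y ∈ ball y₀ ε,
      HasDerivAt (fun y => D Qν k y t) (D Qν (k + 1) y t) y := by
    rw [ae_restrict_iff' measurableSet_Ioi]
    refine ae_of_all _ fun t ht y hy => ?_
    have ht1 := mem_Ioi.1 ht
    rw [mem_ball, Real.dist_eq] at hy
    have hy' := abs_lt.1 hy
    have hy1 : y < 1 := by
      have : y < u := by rw [hudef]; linarith [hy'.2]
      linarith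
    have hbt : 1 < y + (1 - y) * t := arg_mem hy1 ht1
    have hb : HasDerivAt (fun y : ℝ => y + (1 - y) * t) (1 - t) y := by
      have h := (hasDerivAt_id y).add
        (((hasDerivAt_const y (1 : ℝ)).sub (hasDerivAt_id y)).mul_const t)
      rw [show (1 : ℝ) - t = 1 + (0 - 1) * t by ring]
      exact h
    have hf := hasDerivAt_iter hQ k hbt
    have hcomp := hf.comp y hb
    have h2 := (hcomp.const_mul ((1 - t) ^ k)).div_const (Real.sqrt (t ^ 2 - 1))
    have h3 : D Qν (k + 1) y t
        = (1 - t) ^ k * (iteratedDeriv (k + 1) Qν (y + (1 - y) * t) * (1 - t))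
          / Real.sqrt (t ^ 2 - 1) := by
      rw [D]; ring
    rw [show (fun y => D Qν k y t)
        = fun y => (1 - t) ^ k * iteratedDeriv k Qν (y + (1 - y) * t) / Real.sqrt (t ^ 2 - 1)
        from rfl, h3]
    exact h2
  obtain ⟨-, hkey⟩ := hasDerivAt_integral_of_dominated_loc_of_deriv_le
    (μ := volume.restrict (Set.Ioi (1 : ℝ)))
    (F := fun y t => D Qν k y t) (F' := fun y t => D Qν (k + 1) y t)
    (ball_mem_nhds y₀ hε) hmeas hint0 hmeas' hbound hbint hdiff
  exact hkey

end DurandAux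

open DurandAux Set MeasureTheory in
/-- Given Durand's formula
`|Q_ν(x)|² = ∫₁^∞ Q_ν(x² + (1−x²)t) dt/√(t²−1)` on `(−1,1)` and the complete
monotonicity of `Q_ν` on `(1,∞)`, the function `|Q_ν|²` is absolutely monotone
on `(0,1)`: all of its derivatives are nonnegative there. -/
theorem modulus_absolutely_monotone (ν : ℝ) (hν : 0 ≤ ν) (Qν M : ℝ → ℝ)
    (hQ_smooth : ContDiffOn ℝ (⊤ : ℕ∞) Qν (Set.Ioi 1))
    (hQ_cm : ∀ k : ℕ, ∀ x ∈ Set.Ioi (1 : ℝ),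
      0 ≤ (-1 : ℝ) ^ k * iteratedDeriv k Qν x)
    (hint : ∀ x ∈ Set.Ioo (-1 : ℝ) 1,
      MeasureTheory.IntegrableOn
        (fun t => Qν (x ^ 2 + (1 - x ^ 2) * t) / Real.sqrt (t ^ 2 - 1))
        (Set.Ioi 1))
    (hM : ∀ x ∈ Set.Ioo (-1 : ℝ) 1,
      M x = ∫ t in Set.Ioi (1 : ℝ),
        Qν (x ^ 2 + (1 - x ^ 2) * t) / Real.sqrt (t ^ 2 - 1)) :
    ∀ k : ℕ, ∀ x ∈ Set.Ioo (0 : ℝ) 1, 0 ≤ iteratedDeriv k M x := by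
  intro k x hx
  have hpos : ∀ m, ∀ y ∈ Ioo (0 : ℝ) 1, 0 ≤ Nk Qν m y :=
    fun m y hy => Nk_nonneg hQ_cm m hy.2
  have hg : ∀ m, ∀ y ∈ Ioo (0 : ℝ) 1, HasDerivAt (Nk Qν m) (Nk Qν (m + 1) y) y :=
    fun m y hy => Nk_hasDeriv hQ_smooth hQ_cm hint m hy.1 hy.2
  have hEq : Set.EqOn M (fun x => Nk Qν 0 (x ^ 2)) (Ioo (0 : ℝ) 1) := by
    intro z hz
    have hz' : z ∈ Ioo (-1 : ℝ) 1 := ⟨by linarith [hz.1], hz.2⟩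
    rw [hM z hz']
    simp only [Nk, D, pow_zero, one_mul, iteratedDeriv_zero]
  rw [hEq.iteratedDeriv_of_isOpen isOpen_Ioo k hx]
  exact AM.iteratedDeriv_nonneg hpos hg k _ (AM.comp 0) x hx
end
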